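/- arXiv:2208.06022 — 7 statements merged into one kernel-verified Lean document; each statement's English description precedes it below -/
import Mathlib

section
/- Let A : ℝ → Mat₂(ℝ) be a curve of 2×2 real matrices that is differentiable at t₀ with derivative A'(t₀), and let v ∈ ℝ² be such that A(t₀)v ≠ 0. Then the limit as t → t₀ of (1/|t − t₀|) · |(A(t)v) ∧ (A(t₀)v)| / (‖A(t)v‖ · ‖A(t₀)v‖) exists and equals |(A(t₀)v) ∧ (A'(t₀)v)| / ‖A(t₀)v‖². (This gives the speed of the induced projective curve t ↦ Â(t)v̂ in ℙ¹.) -/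
open Matrix Filter Topology

noncomputable section

/-- The wedge product `u ∧ w := u₁w₂ − u₂w₁` of two vectors in `ℝ²`. -/
def wedge (u w : Fin 2 → ℝ) : ℝ := u 0 * w 1 - u 1 * w 0

/-- The Euclidean norm on `ℝ²`. -/
def vnorm (v : Fin 2 → ℝ) : ℝ := Real.sqrt (v 0 ^ 2 + v 1 ^ 2)

/-! With `f t = A(t)v`, the quotient `|f t ∧ f t₀| / |t - t₀|` is the absolute difference
quotient at `t₀` of the scalar function `t ↦ f t ∧ f t₀`, which vanishes at `t₀` and has
derivative `f' ∧ f t₀`; the remaining factor `1 / (‖f t‖ ‖f t₀‖)` is continuous at `t₀`, with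
limit `‖f t₀‖⁻²` since `f t₀ ≠ 0`. -/

/-- The distance `d(û, ŵ)` between the projective points of `u` and `w`. -/
def projDist (u w : Fin 2 → ℝ) : ℝ := |wedge u w| / (vnorm u * vnorm w)

theorem wedge_self (u : Fin 2 → ℝ) : wedge u u = 0 := by
  unfold wedge; ring

theorem wedge_comm (u w : Fin 2 → ℝ) : wedge u w = -wedge w u := by
  unfold wedge; ring

theorem continuous_vnorm : Continuous vnorm := by
  unfold vnorm; fun_prop

theorem vnorm_pos {u : Fin 2 → ℝ} (hu : u ≠ 0) : 0 < vnorm u := by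
  refine Real.sqrt_pos.2 (lt_of_le_of_ne (by positivity) fun h => hu ?_)
  have h0 : u 0 = 0 := by nlinarith [sq_nonneg (u 0), sq_nonneg (u 1)]
  have h1 : u 1 = 0 := by nlinarith [sq_nonneg (u 0), sq_nonneg (u 1)]
  funext i
  fin_cases i <;> assumption

theorem hasDerivAt_mulVec {m n : Type*} [Fintype m] [Fintype n]
    {A : ℝ → Matrix m n ℝ} {A' : Matrix m n ℝ} {t₀ : ℝ}
    (hA : ∀ i j, HasDerivAt (fun t => A t i j) (A' i j) t₀) (v : n → ℝ) :
    HasDerivAt (fun t => (A t).mulVec v) (A'.mulVec v) t₀ := by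
  refine hasDerivAt_pi.2 fun i => ?_
  simp only [Matrix.mulVec, dotProduct]
  exact HasDerivAt.fun_sum fun j _ => (hA i j).mul_const (v j)

theorem HasDerivAt.wedge_const {f : ℝ → Fin 2 → ℝ} {f' : Fin 2 → ℝ} {t₀ : ℝ}
    (hf : HasDerivAt f f' t₀) (c : Fin 2 → ℝ) :
    HasDerivAt (fun t => wedge (f t) c) (wedge f' c) t₀ :=
  ((hasDerivAt_pi.1 hf 0).mul_const (c 1)).sub ((hasDerivAt_pi.1 hf 1).mul_const (c 0))

theorem HasDerivAt.tendsto_abs_div_abs_sub {g : ℝ → ℝ} {g' x : ℝ}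
    (hg : HasDerivAt g g' x) (hx : g x = 0) :
    Tendsto (fun t => |g t| / |t - x|) (𝓝[≠] x) (𝓝 |g'|) :=
  (hasDerivAt_iff_tendsto_slope.1 hg).abs.congr fun t => by
    rw [slope_def_field, hx, sub_zero, abs_div]

theorem HasDerivAt.tendsto_projDist_div_abs_sub {f : ℝ → Fin 2 → ℝ} {f' : Fin 2 → ℝ}
    {t₀ : ℝ} (hf : HasDerivAt f f' t₀) (h₀ : f t₀ ≠ 0) :
    Tendsto (fun t => (1 / |t - t₀|) * projDist (f t) (f t₀))
      (𝓝[≠] t₀) (𝓝 (|wedge (f t₀) f'| / vnorm (f t₀) ^ 2)) := by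
  have hnum := (hf.wedge_const (f t₀)).tendsto_abs_div_abs_sub (wedge_self _)
  have hden : Tendsto (fun t => vnorm (f t) * vnorm (f t₀)) (𝓝[≠] t₀)
      (𝓝 (vnorm (f t₀) ^ 2)) := by
    rw [sq]
    exact ((continuous_vnorm.continuousAt.comp hf.continuousAt).tendsto.mono_left
      nhdsWithin_le_nhds).mul_const _
  rw [wedge_comm, abs_neg]
  refine (hnum.div hden (pow_pos (vnorm_pos h₀) 2).ne').congr fun t => ?_
  simp only [Pi.div_apply, projDist]
  ring

/-- If `A : ℝ → Mat₂(ℝ)` is differentiable at `t₀` with derivative `A'`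
and `A(t₀)v ≠ 0`, then
`(1/|t − t₀|) · |(A(t)v) ∧ (A(t₀)v)| / (‖A(t)v‖ · ‖A(t₀)v‖)` tends, as `t → t₀`, to
`|(A(t₀)v) ∧ (A'v)| / ‖A(t₀)v‖²`. -/
theorem stmt_0 (A : ℝ → Matrix (Fin 2) (Fin 2) ℝ) (A' : Matrix (Fin 2) (Fin 2) ℝ) (t₀ : ℝ)
    (hA : ∀ i j, HasDerivAt (fun t => A t i j) (A' i j) t₀)
    (v : Fin 2 → ℝ) (hv : (A t₀).mulVec v ≠ 0) :
    Tendsto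
      (fun t => (1 / |t - t₀|) *
        (|wedge ((A t).mulVec v) ((A t₀).mulVec v)| /
          (vnorm ((A t).mulVec v) * vnorm ((A t₀).mulVec v))))
      (𝓝[≠] t₀)
      (𝓝 (|wedge ((A t₀).mulVec v) (A'.mulVec v)| / vnorm ((A t₀).mulVec v) ^ 2)) :=
  (hasDerivAt_mulVec hA v).tendsto_projDist_div_abs_sub hv
end
end

section
/- Let n ≥ 1 and for i = 1, …, n let A_i : ℝ → Mat₂(ℝ) be differentiable matrix curves such that for every t ∈ ℝ, det A_i(t) > 0, and for every t ∈ ℝ and every v ∈ ℝ², (A_i(t)v) ∧ (A_i'(t)v) ≥ 0. Then the product curve M(t) := A_n(t) ⋯ A_2(t) A_1(t) satisfies (M(t)v) ∧ (M'(t)v) ≥ 0 for every t ∈ ℝ and every v ∈ ℝ². (Products of positively winding curves are positively winding.) -/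
open Matrix Filter Topology

noncomputable section

/-!
By the Leibniz rule, `(BC)' = B'C + BC'`, so
`(BCv) ∧ ((BC)'v) = (B(Cv)) ∧ (B'(Cv)) + det B · (Cv) ∧ (C'v)`,
using that `B` scales the wedge product by `det B`. Both terms are nonnegative when `B` and `C`
wind positively and `det B ≥ 0`; induction on the number of factors finishes the proof.
-/

lemma wedge_mulVec_mulVec (B : Matrix (Fin 2) (Fin 2) ℝ) (u w : Fin 2 → ℝ) :
    wedge (B *ᵥ u) (B *ᵥ w) = B.det * wedge u w := by
  simp only [wedge, mulVec, dotProduct, Fin.sum_univ_two, det_fin_two]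
  ring

lemma wedge_add_right (u w w' : Fin 2 → ℝ) : wedge u (w + w') = wedge u w + wedge u w' := by
  simp only [wedge, Pi.add_apply]
  ring

def WindsPositively (B B' : Matrix (Fin 2) (Fin 2) ℝ) : Prop :=
  ∀ v, 0 ≤ wedge (B *ᵥ v) (B' *ᵥ v)

lemma WindsPositively.mul {B B' C C' : Matrix (Fin 2) (Fin 2) ℝ} (hB : WindsPositively B B')
    (hdet : 0 ≤ B.det) (hC : WindsPositively C C') :
    WindsPositively (B * C) (B' * C + B * C') := by
  intro v
  rw [add_mulVec, wedge_add_right, ← mulVec_mulVec, ← mulVec_mulVec, ← mulVec_mulVec,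
    wedge_mulVec_mulVec]
  exact add_nonneg (hB (C *ᵥ v)) (mul_nonneg hdet (hC v))

lemma hasDerivAt_matrix_mul {l m n : Type*} [Fintype m] {M : ℝ → Matrix l m ℝ}
    {N : ℝ → Matrix m n ℝ} {M' : Matrix l m ℝ} {N' : Matrix m n ℝ} {t : ℝ}
    (hM : ∀ i j, HasDerivAt (fun s => M s i j) (M' i j) t)
    (hN : ∀ i j, HasDerivAt (fun s => N s i j) (N' i j) t) (i : l) (k : n) :
    HasDerivAt (fun s => (M s * N s) i k) ((M' * N t + M t * N') i k) t := by
  simp only [mul_apply, Matrix.add_apply, ← Finset.sum_add_distrib]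
  exact HasDerivAt.fun_sum fun j _ => (hM i j).fun_mul (hN j k)

lemma List.prod_reverse_ofFn_succ {α : Type*} [Monoid α] {n : ℕ} (f : Fin (n + 1) → α) :
    (List.ofFn f).reverse.prod =
      f (Fin.last n) * (List.ofFn fun i : Fin n => f i.castSucc).reverse.prod := by
  rw [List.ofFn_succ', List.concat_eq_append, List.reverse_append, List.reverse_singleton,
    List.singleton_append, List.prod_cons]

theorem exists_hasDerivAt_prod_windsPositively {n : ℕ}
    (A A' : Fin n → ℝ → Matrix (Fin 2) (Fin 2) ℝ)
    (hderiv : ∀ i t, ∀ j k, HasDerivAt (fun s => A i s j k) (A' i t j k) t)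
    (hdet : ∀ i t, 0 ≤ (A i t).det) (hwind : ∀ i t, WindsPositively (A i t) (A' i t)) (t : ℝ) :
    ∃ M' : Matrix (Fin 2) (Fin 2) ℝ,
      (∀ j k, HasDerivAt (fun s => (List.ofFn fun i => A i s).reverse.prod j k) (M' j k) t) ∧
      WindsPositively (List.ofFn fun i => A i t).reverse.prod M' := by
  induction n with
  | zero =>
    refine ⟨0, fun j k => by simpa using hasDerivAt_const t ((1 : Matrix (Fin 2) (Fin 2) ℝ) j k),
      fun v => by simp [wedge]⟩
  | succ n ih =>
    obtain ⟨Q', hQ', hQwind⟩ := ih (fun i => A i.castSucc) (fun i => A' i.castSucc)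
      (fun i => hderiv i.castSucc) (fun i => hdet i.castSucc) (fun i => hwind i.castSucc)
    simp only [List.prod_reverse_ofFn_succ]
    exact ⟨_, hasDerivAt_matrix_mul (hderiv (Fin.last n) t) hQ',
      (hwind (Fin.last n) t).mul (hdet (Fin.last n) t) hQwind⟩

theorem stmt_1_general (n : ℕ) (A A' : Fin n → ℝ → Matrix (Fin 2) (Fin 2) ℝ)
    (hderiv : ∀ i t, ∀ j k, HasDerivAt (fun s => A i s j k) (A' i t j k) t)
    (hdet : ∀ i t, 0 < (A i t).det)
    (hwind : ∀ i t (v : Fin 2 → ℝ), 0 ≤ wedge ((A i t).mulVec v) ((A' i t).mulVec v)) :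
    ∀ (t : ℝ) (M' : Matrix (Fin 2) (Fin 2) ℝ),
      (∀ j k, HasDerivAt (fun s => ((List.ofFn fun i => A i s).reverse.prod) j k) (M' j k) t) →
      ∀ v : Fin 2 → ℝ,
        0 ≤ wedge (((List.ofFn fun i => A i t).reverse.prod).mulVec v) (M'.mulVec v) := by
  intro t M' hM'
  obtain ⟨N', hN', hN'wind⟩ :=
    exists_hasDerivAt_prod_windsPositively A A' hderiv (fun i t => (hdet i t).le) hwind t
  have hM'N' : M' = N' := ext fun j k => (hM' j k).unique (hN' j k)
  exact hM'N' ▸ hN'wind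

/-- Products of positively winding differentiable matrix curves with
positive determinant are positively winding. The product curve is
`M(t) = A_{n-1}(t) ⋯ A_1(t) A_0(t)` (indices `0, …, n-1`), realized as the product of the
reversed list `[A_0(t), …, A_{n-1}(t)]`, and `M'` is any matrix of entrywise derivatives
of `M` at `t`. -/
theorem stmt_1 (n : ℕ) (hn : 1 ≤ n) (A A' : Fin n → ℝ → Matrix (Fin 2) (Fin 2) ℝ)
    (hderiv : ∀ i t, ∀ j k, HasDerivAt (fun s => A i s j k) (A' i t j k) t)
    (hdet : ∀ i t, 0 < (A i t).det)
    (hwind : ∀ i t (v : Fin 2 → ℝ), 0 ≤ wedge ((A i t).mulVec v) ((A' i t).mulVec v)) :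
    ∀ (t : ℝ) (M' : Matrix (Fin 2) (Fin 2) ℝ),
      (∀ j k, HasDerivAt (fun s => ((List.ofFn fun i => A i s).reverse.prod) j k) (M' j k) t) →
      ∀ v : Fin 2 → ℝ,
        0 ≤ wedge (((List.ofFn fun i => A i t).reverse.prod).mulVec v) (M'.mulVec v) :=
  stmt_1_general n A A' hderiv hdet hwind
end
end

section
/- Let M : ℝ → Mat₂(ℝ) be a continuously differentiable matrix curve with det M(t) = 1 for all t, such that (M(t)v) ∧ (M'(t)v) ≥ 0 for every t ∈ ℝ and every v ∈ ℝ², and such that there is a constant c > 0 with the property that for every t ∈ ℝ there exists a unit vector v with (M(t)v) ∧ (M'(t)v) ≥ c. If t₀ ∈ ℝ satisfies |tr M(t₀)| < 2, then the derivative of t ↦ tr M(t) at t₀ is nonzero. -/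
open Matrix Filter Topology

noncomputable section

lemma key (a b cc p q r s : ℝ)
    (hpsd : ∀ x y : ℝ, 0 ≤ cc*x^2 - 2*a*x*y - b*y^2)
    (hex : ∃ x y : ℝ, 0 < cc*x^2 - 2*a*x*y - b*y^2)
    (hq : (p-s)^2 + 4*(q*r) < 0)
    (h7 : a*(p-s) + b*r + cc*q = 0) : False := by
  have hc : 0 ≤ cc := by have := hpsd 1 0; nlinarith
  have hb : b ≤ 0 := by have := hpsd 0 1; nlinarith
  have hdisc : a^2 + b*cc ≤ 0 := by
    rcases lt_or_eq_of_le hc with hc' | hc'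
    · nlinarith [hpsd a cc]
    · rcases lt_or_eq_of_le hb with hb' | hb'
      · nlinarith [hpsd (-b) a]
      · have ha : a = 0 := by have := hpsd a 1; nlinarith
        nlinarith
  have hsq : (a*(p-s))^2 = (b*r + cc*q)^2 := by
    linear_combination (a*(p-s) - b*r - cc*q) * h7
  rcases lt_or_eq_of_le hb with hb' | hb'
  · rcases lt_or_eq_of_le hc with hc' | hc'
    · nlinarith [hsq, sq_nonneg (b*r - cc*q), mul_pos (neg_pos.mpr hb') hc',
        sq_nonneg (p-s), mul_nonneg (sq_nonneg (p-s)) (by linarith : (0:ℝ) ≤ -(a^2 + b*cc)), hq]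
    · have ha : a = 0 := by nlinarith
      have hr : r = 0 := by
        have : b * r = 0 := by rw [ha, ← hc'] at h7; simpa using h7
        exact (mul_eq_zero.mp this).resolve_left (ne_of_lt hb')
      rw [hr] at hq
      nlinarith [sq_nonneg (p-s)]
  · have ha : a = 0 := by nlinarith
    rcases lt_or_eq_of_le hc with hc' | hc'
    · have hq0 : q = 0 := by
        have : cc * q = 0 := by rw [ha, hb'] at h7; simpa using h7
        exact (mul_eq_zero.mp this).resolve_left (ne_of_gt hc')
      rw [hq0] at hq
      nlinarith [sq_nonneg (p-s)]
    · obtain ⟨x, y, hxy⟩ := hex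
      rw [hb', ← hc', ha] at hxy
      norm_num at hxy



/-- Let `M : ℝ → SL₂(ℝ)` be a continuously differentiable positively winding
curve (with winding quadratic form having, uniformly in `t`, a direction with speed `≥ c > 0`).
If `|tr M(t₀)| < 2` then the derivative of `t ↦ tr M(t)` at `t₀` is nonzero. -/
theorem stmt_5 (M M' : ℝ → Matrix (Fin 2) (Fin 2) ℝ)
    (hderiv : ∀ t i j, HasDerivAt (fun s => M s i j) (M' t i j) t)
    (hcont : ∀ i j, Continuous fun t => M' t i j)
    (hdet : ∀ t, (M t).det = 1)
    (hwind : ∀ t (v : Fin 2 → ℝ), 0 ≤ wedge ((M t).mulVec v) ((M' t).mulVec v))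
    (c : ℝ) (hc : 0 < c)
    (hstrict : ∀ t, ∃ v : Fin 2 → ℝ, vnorm v = 1 ∧
      c ≤ wedge ((M t).mulVec v) ((M' t).mulVec v))
    (t₀ : ℝ) (htr : |(M t₀).trace| < 2) :
    deriv (fun t => (M t).trace) t₀ ≠ 0 := by
  set p := M t₀ 0 0 with hp; set q := M t₀ 0 1 with hq
  set r := M t₀ 1 0 with hr; set s := M t₀ 1 1 with hs
  set p' := M' t₀ 0 0 with hp'; set q' := M' t₀ 0 1 with hq'
  set r' := M' t₀ 1 0 with hr'; set s' := M' t₀ 1 1 with hs'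
  -- derivative of trace
  have hT : HasDerivAt (fun t => (M t).trace) (p' + s') t₀ := by
    simp only [Matrix.trace_fin_two]
    exact (hderiv t₀ 0 0).add (hderiv t₀ 1 1)
  rw [hT.deriv]
  intro hsum
  -- determinant at t₀
  have hdet0 : p * s - q * r = 1 := by
    have := hdet t₀; rw [Matrix.det_fin_two] at this; exact this
  -- derivative of determinant is zero
  have hstar : p' * s + p * s' - (q' * r + q * r') = 0 := by
    have hD : HasDerivAt (fun t => M t 0 0 * M t 1 1 - M t 0 1 * M t 1 0)
        (p' * s + p * s' - (q' * r + q * r')) t₀ :=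
      ((hderiv t₀ 0 0).mul (hderiv t₀ 1 1)).sub ((hderiv t₀ 0 1).mul (hderiv t₀ 1 0))
    have hfun : (fun t => M t 0 0 * M t 1 1 - M t 0 1 * M t 1 0) = fun _ => (1:ℝ) := by
      funext t
      rw [← Matrix.det_fin_two (M t)]
      exact hdet t
    rw [hfun] at hD
    exact hD.unique (hasDerivAt_const t₀ 1)
  -- quadratic-form identity
  have hId : ∀ v : Fin 2 → ℝ, wedge ((M t₀).mulVec v) ((M' t₀).mulVec v) =
      (p*r' - r*p') * (v 0)^2 - 2*(s*p' - q*r') * (v 0) * (v 1) - (s*q' - q*s') * (v 1)^2 := by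
    intro v
    simp only [wedge, Matrix.mulVec, dotProduct, Fin.sum_univ_two, ← hp, ← hq, ← hr, ← hs,
      ← hp', ← hq', ← hr', ← hs']
    linear_combination (v 0) * (v 1) * hstar
  -- trace bound
  rw [Matrix.trace_fin_two] at htr
  have htr' := abs_lt.mp htr
  have hqlt : (p - s)^2 + 4*(q*r) < 0 := by nlinarith [htr'.1, htr'.2, hdet0]
  -- winding form conditions
  have hpsd : ∀ x y : ℝ, 0 ≤ (p*r' - r*p')*x^2 - 2*(s*p' - q*r')*x*y - (s*q' - q*s')*y^2 := by
    intro x y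
    have := hwind t₀ ![x, y]
    rw [hId ![x, y]] at this
    simpa using this
  have hex : ∃ x y : ℝ, 0 < (p*r' - r*p')*x^2 - 2*(s*p' - q*r')*x*y - (s*q' - q*s')*y^2 := by
    obtain ⟨v, -, hv⟩ := hstrict t₀
    exact ⟨v 0, v 1, by rw [hId v] at hv; linarith⟩
  -- the trace identity
  have h7 : (s*p' - q*r')*(p - s) + (s*q' - q*s')*r + (p*r' - r*p')*q = 0 := by
    linear_combination hsum - s * hstar + (s' + p') * hdet0
  exact key (s*p' - q*r') (s*q' - q*s') (p*r' - r*p') p q r s hpsd hex hqlt h7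
end
end

section
/- Let X be a compact topological space, A : X → Mat₂(ℝ) continuous with det A(x) > 0 for all x ∈ X, E : X → Mat₂(ℝ) continuous, and suppose there is r > 0 such that for every x ∈ X either E(x)² = 0 or 4·det E(x) − (tr E(x))² ≥ r. Then there exist constants c > 0 and R > 0 such that for every x ∈ X and every t ∈ ℂ with |Im t| ≤ R, one has |det( A(x)_ℂ · (I + t · E(x)_ℂ) )| ≥ c, where M_ℂ denotes the 2×2 complex matrix obtained from a real matrix M by viewing its entries in ℂ. -/
/-! On the compact space `det A` is bounded below by some `a > 0` and `det E` above by some `M`.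
Pointwise, `det (1 + t E) = det E · t² + tr E · t + 1`. If `E² = 0` this is `1`; otherwise
completing the square gives `4 det E · |det (1 + t E)| ≥ Δ_E - 4 (det E)² (Im t)²`, which is at
least `r / 2` as soon as `8 M² (Im t)² ≤ r`. -/

open Matrix

theorem neg_discrim_sub_le_norm_quadratic (a b c : ℝ) (z : ℂ) :
    -discrim a b c - 4 * a ^ 2 * z.im ^ 2 ≤ 4 * |a| * ‖a * z ^ 2 + b * z + c‖ := by
  have hfactor : 4 * a * (a * z ^ 2 + b * z + c) = (2 * a * z + b) ^ 2 - discrim a b c := by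
    rw [discrim]; push_cast; ring
  have hre : ((2 * a * z + b) ^ 2 - discrim a b c : ℂ).re
      = (2 * a * z.re + b) ^ 2 - 4 * a ^ 2 * z.im ^ 2 - discrim a b c := by
    simp only [sq, Complex.sub_re, Complex.mul_re, Complex.add_re, Complex.re_ofNat,
      Complex.ofReal_re, Complex.im_ofNat, Complex.ofReal_im, mul_zero, sub_zero, Complex.mul_im,
      zero_mul, add_zero, Complex.add_im, sub_left_inj, sub_right_inj]
    ring
  calc -discrim a b c - 4 * a ^ 2 * z.im ^ 2
      ≤ ((2 * a * z + b) ^ 2 - discrim a b c : ℂ).re := by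
        rw [hre]; nlinarith [sq_nonneg (2 * a * z.re + b)]
    _ ≤ ‖4 * a * (a * z ^ 2 + b * z + c)‖ := hfactor ▸ Complex.re_le_norm _
    _ = 4 * |a| * ‖a * z ^ 2 + b * z + c‖ := by
        rw [norm_mul, norm_mul, Complex.norm_real, Real.norm_eq_abs]; norm_num

namespace Matrix

section IsReduced

variable {n R : Type*} [Fintype n] [DecidableEq n] [CommRing R] [IsReduced R]

theorem det_eq_zero_of_isNilpotent [Nonempty n] {M : Matrix n n R} (hM : IsNilpotent M) :
    M.det = 0 := by
  obtain ⟨k, hk⟩ := hM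
  exact IsNilpotent.eq_zero ⟨k, by rw [← det_pow, hk, det_zero]⟩

theorem trace_eq_zero_of_isNilpotent {M : Matrix n n R} (hM : IsNilpotent M) : M.trace = 0 :=
  (isNilpotent_trace_of_isNilpotent hM).eq_zero

end IsReduced

theorem det_one_add_smul_fin_two {R : Type*} [CommRing R] (t : R)
    (M : Matrix (Fin 2) (Fin 2) R) :
    (1 + t • M).det = M.det * t ^ 2 + M.trace * t + 1 := by
  simp only [det_fin_two, add_apply, one_apply_eq, smul_apply, smul_eq_mul, ne_eq, zero_ne_one,
    not_false_eq_true, one_apply_ne, one_ne_zero, trace_fin_two]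
  ring

theorem det_map_ofReal {n : Type*} [Fintype n] [DecidableEq n] (M : Matrix n n ℝ) :
    (M.map Complex.ofReal).det = M.det :=
  (Complex.ofRealHom.map_det M).symm

theorem trace_map_ofReal {n : Type*} [Fintype n] (M : Matrix n n ℝ) :
    (M.map Complex.ofReal).trace = M.trace :=
  (AddMonoidHom.map_trace Complex.ofRealHom M).symm

theorem min_le_norm_det_one_add_smul_map_ofReal (E : Matrix (Fin 2) (Fin 2) ℝ) {r M : ℝ}
    (hr : 0 < r) (hEM : E.det ≤ M)
    (hcond : E * E = 0 ∨ r ≤ 4 * E.det - E.trace ^ 2) {t : ℂ} (ht : 8 * M ^ 2 * t.im ^ 2 ≤ r) :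
    min 1 (r / (8 * M)) ≤ ‖(1 + t • E.map Complex.ofReal).det‖ := by
  rw [det_one_add_smul_fin_two, det_map_ofReal, trace_map_ofReal]
  rcases hcond with hnil | hdisc
  · have hE : IsNilpotent E := ⟨2, by rw [sq, hnil]⟩
    simp [det_eq_zero_of_isNilpotent hE, trace_eq_zero_of_isNilpotent hE]
  · have hD : 0 < E.det := by nlinarith [sq_nonneg E.trace]
    have hbound := neg_discrim_sub_le_norm_quadratic E.det E.trace 1 t
    rw [discrim, abs_of_pos hD] at hbound
    push_cast at hbound
    have : 4 * E.det ^ 2 * t.im ^ 2 ≤ 4 * M ^ 2 * t.im ^ 2 := by gcongr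
    refine (min_le_right _ _).trans ?_
    calc r / (8 * M) ≤ r / (8 * E.det) := by gcongr
      _ ≤ _ := by rw [div_le_iff₀ (by positivity)]; nlinarith

end Matrix

theorem exists_pos_forall_le_of_compactSpace {X : Type*} [TopologicalSpace X] [CompactSpace X]
    {f : X → ℝ} (hf : Continuous f) (hpos : ∀ x, 0 < f x) : ∃ a > 0, ∀ x, a ≤ f x := by
  rcases isEmpty_or_nonempty X with _ | _
  · exact ⟨1, one_pos, isEmptyElim⟩
  obtain ⟨x₀, -, hx₀⟩ := isCompact_univ.exists_isMinOn Set.univ_nonempty hf.continuousOn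
  exact ⟨f x₀, hpos x₀, fun x => hx₀ (Set.mem_univ x)⟩

theorem exists_one_le_forall_le_of_compactSpace {X : Type*} [TopologicalSpace X] [CompactSpace X]
    {f : X → ℝ} (hf : Continuous f) : ∃ M ≥ 1, ∀ x, f x ≤ M := by
  obtain ⟨M, hM1, hM⟩ := (bddAbove_iff_exists_ge 1).1 (isCompact_range hf).bddAbove
  exact ⟨M, hM1, fun x => hM _ (Set.mem_range_self x)⟩

/-- Invertibility criterion: if `A, E : X → Mat₂(ℝ)` are continuous on a
compact space `X`, `det A(x) > 0`, and for each `x` either `E(x)² = 0` or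
`4 det E(x) − (tr E(x))² ≥ r > 0`, then there are `c > 0` and `R > 0` such that
`|det(A(x)·(I + tE(x)))| ≥ c` for every `x` and every complex `t` with `|Im t| ≤ R`. -/
theorem stmt_7 (X : Type*) [TopologicalSpace X] [CompactSpace X]
    (A E : X → Matrix (Fin 2) (Fin 2) ℝ)
    (hA : ∀ i j, Continuous fun x => A x i j)
    (hE : ∀ i j, Continuous fun x => E x i j)
    (hdet : ∀ x, 0 < (A x).det)
    (r : ℝ) (hr : 0 < r)
    (hcond : ∀ x, E x * E x = 0 ∨ r ≤ 4 * (E x).det - (E x).trace ^ 2) :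
    ∃ c > (0 : ℝ), ∃ R > (0 : ℝ), ∀ x, ∀ t : ℂ, |t.im| ≤ R →
      c ≤ ‖
        (((A x).map (Complex.ofReal)) * (1 + t • (E x).map (Complex.ofReal))).det‖ := by
  obtain ⟨a, ha, haA⟩ :=
    exists_pos_forall_le_of_compactSpace (continuous_matrix hA).matrix_det hdet
  obtain ⟨M, hM, hME⟩ := exists_one_le_forall_le_of_compactSpace (continuous_matrix hE).matrix_det
  refine ⟨a * min 1 (r / (8 * M)), by positivity, √(r / (8 * M ^ 2)), by positivity,
    fun x t ht => ?_⟩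
  have him : 8 * M ^ 2 * t.im ^ 2 ≤ r := by
    rw [← le_div_iff₀' (by positivity), ← sq_abs]
    exact (Real.le_sqrt (abs_nonneg _) (by positivity)).1 ht
  rw [det_mul, det_map_ofReal, norm_mul, Complex.norm_real, Real.norm_of_nonneg (hdet x).le]
  exact mul_le_mul (haA x) (min_le_norm_det_one_add_smul_map_ofReal (E x) hr (hME x) (hcond x) him)
    (by positivity) (hdet x).le
end

section
/- Let A ∈ Mat₂(ℝ) with det A = 1, and let ‖A‖ denote its operator norm as a linear map of Euclidean ℝ². Assume ‖A‖ > 1, and let u be a unit vector with (Aᵀ A) u = ‖A‖⁻² u (the least singular direction of A). Then for every unit vector v ∈ ℝ²: |v ∧ u| = √( (‖Av‖² − ‖A‖⁻²) / (‖A‖² − ‖A‖⁻²) ). In particular, (1/‖A‖)·√(‖Av‖² − ‖A‖⁻²) ≤ |v ∧ u| ≤ ‖Av‖/‖A‖. -/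
open Matrix

noncomputable section

/-- The operator norm of a `2 × 2` real matrix acting on Euclidean `ℝ²`. -/
def opnorm (A : Matrix (Fin 2) (Fin 2) ℝ) : ℝ := ‖Matrix.toEuclideanCLM (𝕜 := ℝ) A‖

/-- For `A ∈ SL₂(ℝ)` with `‖A‖ > 1` and `u` a unit vector in the least
singular direction of `A` (`AᵀA u = ‖A‖⁻² u`), every unit vector `v` satisfies
`|v ∧ u| = √((‖Av‖² − ‖A‖⁻²)/(‖A‖² − ‖A‖⁻²))`, whence
`(1/‖A‖)√(‖Av‖² − ‖A‖⁻²) ≤ |v ∧ u| ≤ ‖Av‖/‖A‖`. -/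
theorem stmt_13 (A : Matrix (Fin 2) (Fin 2) ℝ) (hdet : A.det = 1) (hA : 1 < opnorm A)
    (u : Fin 2 → ℝ) (hu : vnorm u = 1)
    (hu' : (Aᵀ * A).mulVec u = ((opnorm A) ^ 2)⁻¹ • u) :
    ∀ v : Fin 2 → ℝ, vnorm v = 1 →
      |wedge v u| =
        Real.sqrt ((vnorm (A.mulVec v) ^ 2 - ((opnorm A) ^ 2)⁻¹) /
          ((opnorm A) ^ 2 - ((opnorm A) ^ 2)⁻¹)) ∧
      (1 / opnorm A) * Real.sqrt (vnorm (A.mulVec v) ^ 2 - ((opnorm A) ^ 2)⁻¹) ≤ |wedge v u| ∧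
      |wedge v u| ≤ vnorm (A.mulVec v) / opnorm A := by
  intro v hv
  set a : ℝ := opnorm A with ha_def
  clear_value a
  have ha0 : (0:ℝ) < a := lt_trans one_pos hA
  have ha2 : (1:ℝ) < a ^ 2 := by nlinarith
  set t : ℝ := (a ^ 2)⁻¹ with ht_def
  clear_value t
  have ht0 : (0:ℝ) < t := by rw [ht_def]; positivity
  have hta : t * a ^ 2 = 1 := by rw [ht_def]; exact inv_mul_cancel₀ (by positivity)
  have ht1 : t < 1 := by nlinarith
  have hu2 : u 0 ^ 2 + u 1 ^ 2 = 1 := by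
    have h := congrArg (· ^ 2) hu
    simpa [vnorm, Real.sq_sqrt (by positivity : (0:ℝ) ≤ u 0 ^ 2 + u 1 ^ 2)] using h
  have hv2 : v 0 ^ 2 + v 1 ^ 2 = 1 := by
    have h := congrArg (· ^ 2) hv
    simpa [vnorm, Real.sq_sqrt (by positivity : (0:ℝ) ≤ v 0 ^ 2 + v 1 ^ 2)] using h
  have hdet' : A 0 0 * A 1 1 - A 0 1 * A 1 0 = 1 := by
    simpa [Matrix.det_fin_two] using hdet
  have h0 := congrFun hu' 0
  have h1 := congrFun hu' 1
  simp only [Matrix.mulVec, Matrix.mul_apply, dotProduct, Fin.sum_univ_two,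
    Matrix.transpose_apply, Pi.smul_apply, smul_eq_mul] at h0 h1
  -- quadratic form facts: `uᵀ(AᵀA)u = t`, `wᵀ(AᵀA)u = 0`, `wᵀ(AᵀA)w = a²` for `w ⊥ u`
  have e2 : (A 0 0 ^ 2 + A 1 0 ^ 2) * u 0 ^ 2
      + 2 * (A 0 0 * A 0 1 + A 1 0 * A 1 1) * u 0 * u 1
      + (A 0 1 ^ 2 + A 1 1 ^ 2) * u 1 ^ 2 = t := by
    linear_combination u 0 * h0 + u 1 * h1 + t * hu2
  have e3 : (A 0 0 * A 0 1 + A 1 0 * A 1 1) * (u 0 ^ 2 - u 1 ^ 2)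
      + ((A 0 1 ^ 2 + A 1 1 ^ 2) - (A 0 0 ^ 2 + A 1 0 ^ 2)) * (u 0 * u 1) = 0 := by
    linear_combination u 0 * h1 - u 1 * h0
  have e4t : t * ((A 0 0 ^ 2 + A 1 0 ^ 2) * u 1 ^ 2
      - 2 * (A 0 0 * A 0 1 + A 1 0 * A 1 1) * u 0 * u 1
      + (A 0 1 ^ 2 + A 1 1 ^ 2) * u 0 ^ 2) = 1 := by
    linear_combination
      (-((A 0 0 ^ 2 + A 1 0 ^ 2) * u 1 ^ 2
        - 2 * (A 0 0 * A 0 1 + A 1 0 * A 1 1) * u 0 * u 1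
        + (A 0 1 ^ 2 + A 1 1 ^ 2) * u 0 ^ 2)) * e2
      + ((A 0 0 * A 0 1 + A 1 0 * A 1 1) * (u 0 ^ 2 - u 1 ^ 2)
        + ((A 0 1 ^ 2 + A 1 1 ^ 2) - (A 0 0 ^ 2 + A 1 0 ^ 2)) * (u 0 * u 1)) * e3
      + ((A 0 0 * A 1 1 - A 0 1 * A 1 0 + 1) * (u 0 ^ 2 + u 1 ^ 2) ^ 2) * hdet'
      + (u 0 ^ 2 + u 1 ^ 2 + 1) * hu2
  have e4 : (A 0 0 ^ 2 + A 1 0 ^ 2) * u 1 ^ 2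
      - 2 * (A 0 0 * A 0 1 + A 1 0 * A 1 1) * u 0 * u 1
      + (A 0 1 ^ 2 + A 1 1 ^ 2) * u 0 ^ 2 = a ^ 2 :=
    mul_left_cancel₀ (ne_of_gt ht0) (e4t.trans hta.symm)
  have key : ∀ C S : ℝ, v 0 = C * u 0 - S * u 1 → v 1 = C * u 1 + S * u 0 →
      (A 0 0 * v 0 + A 0 1 * v 1) ^ 2 + (A 1 0 * v 0 + A 1 1 * v 1) ^ 2
        = t * C ^ 2 + a ^ 2 * S ^ 2 := by
    intro C S hC0 hC1
    rw [hC0, hC1]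
    linear_combination C ^ 2 * e2 + (2 * C * S) * e3 + S ^ 2 * e4
  have hC0 : v 0 = (v 0 * u 0 + v 1 * u 1) * u 0 - (v 1 * u 0 - v 0 * u 1) * u 1 := by
    linear_combination (-(v 0)) * hu2
  have hC1 : v 1 = (v 0 * u 0 + v 1 * u 1) * u 1 + (v 1 * u 0 - v 0 * u 1) * u 0 := by
    linear_combination (-(v 1)) * hu2
  have hkey := key _ _ hC0 hC1
  set C : ℝ := v 0 * u 0 + v 1 * u 1 with hCdef
  set S : ℝ := v 1 * u 0 - v 0 * u 1 with hSdef
  have hCS : C ^ 2 + S ^ 2 = 1 := by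
    rw [hCdef, hSdef]
    linear_combination (v 0 ^ 2 + v 1 ^ 2) * hu2 + hv2
  have hsS : wedge v u = -S := by
    rw [hSdef]; show v 0 * u 1 - v 1 * u 0 = _; ring
  clear_value C S
  have hN : vnorm (A.mulVec v) ^ 2
      = (A 0 0 * v 0 + A 0 1 * v 1) ^ 2 + (A 1 0 * v 0 + A 1 1 * v 1) ^ 2 := by
    simp only [vnorm, Matrix.mulVec, dotProduct, Fin.sum_univ_two]
    rw [Real.sq_sqrt (by positivity)]
  have hNval : vnorm (A.mulVec v) ^ 2 = t * C ^ 2 + a ^ 2 * S ^ 2 := hN.trans hkey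
  have habs : |wedge v u| = |S| := by rw [hsS, abs_neg]
  have hNt : vnorm (A.mulVec v) ^ 2 - t = S ^ 2 * (a ^ 2 - t) := by
    rw [hNval]; linear_combination t * hCS
  clear h0 h1 e2 e3 e4t e4 key hkey hC0 hC1 hu' hdet hdet' hu hv hu2 hv2 hN
  have hat : (0:ℝ) < a ^ 2 - t := sub_pos.mpr (lt_trans ht1 ha2)
  refine ⟨?_, ?_, ?_⟩
  · rw [habs, show (vnorm (A.mulVec v) ^ 2 - t) / (a ^ 2 - t) = S ^ 2 by
      rw [hNt, mul_div_assoc, div_self (ne_of_gt hat), mul_one]]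
    exact (Real.sqrt_sq_eq_abs S).symm
  · rw [habs]
    have h1' : Real.sqrt (vnorm (A.mulVec v) ^ 2 - t) ≤ |S| * a := by
      rw [hNt]
      calc Real.sqrt (S ^ 2 * (a ^ 2 - t)) ≤ Real.sqrt (S ^ 2 * a ^ 2) :=
            Real.sqrt_le_sqrt (by nlinarith [sq_nonneg S])
        _ = |S| * a := by
            rw [show S ^ 2 * a ^ 2 = (|S| * a) ^ 2 by rw [mul_pow, sq_abs]]
            exact Real.sqrt_sq (by positivity)
    rw [div_mul_eq_mul_div, one_mul, div_le_iff₀ ha0]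
    linarith
  · rw [habs, le_div_iff₀ ha0]
    have hvn : vnorm (A.mulVec v) = Real.sqrt (vnorm (A.mulVec v) ^ 2) :=
      (Real.sqrt_sq (by unfold vnorm; positivity)).symm
    have h2 : |S| * a = Real.sqrt (a ^ 2 * S ^ 2) := by
      rw [show a ^ 2 * S ^ 2 = (|S| * a) ^ 2 by rw [mul_pow, sq_abs]; ring]
      exact (Real.sqrt_sq (by positivity)).symm
    rw [h2, hvn]
    apply Real.sqrt_le_sqrt
    rw [hNval]
    nlinarith [sq_nonneg C]
end
end

section
/- Let A ∈ Mat₂(ℝ) with det A = 1 and operator norm ‖A‖ > 1 (on Euclidean ℝ²). Let u be a unit vector with (Aᵀ A) u = ‖A‖⁻² u, and let w be a unit vector with (A Aᵀ) w = ‖A‖² w. Then for every unit vector v ∈ ℝ² with v ∧ u ≠ 0: |(Av) ∧ w| / ‖Av‖ ≤ 1 / ( |v ∧ u| · ‖A‖² ). -/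
set_option maxHeartbeats 1000000 in
lemma aux14 (a p q r t u0 u1 w0 w1 v0 v1 : ℝ)
    (ha : 1 < a)
    (hdet : p * t - q * r = 1)
    (hu2 : u0 ^ 2 + u1 ^ 2 = 1) (hw2 : w0 ^ 2 + w1 ^ 2 = 1) (hv2 : v0 ^ 2 + v1 ^ 2 = 1)
    (eu0 : (p * p + r * r) * u0 + (p * q + r * t) * u1 = (a ^ 2)⁻¹ * u0)
    (eu1 : (q * p + t * r) * u0 + (q * q + t * t) * u1 = (a ^ 2)⁻¹ * u1)
    (ew0 : (p * p + q * q) * w0 + (p * r + q * t) * w1 = a ^ 2 * w0)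
    (ew1 : (r * p + t * q) * w0 + (r * r + t * t) * w1 = a ^ 2 * w1)
    (hvu : v0 * u1 - v1 * u0 ≠ 0) :
    |(p * v0 + q * v1) * w1 - (r * v0 + t * v1) * w0| /
        Real.sqrt ((p * v0 + q * v1) ^ 2 + (r * v0 + t * v1) ^ 2) ≤
      1 / (|v0 * u1 - v1 * u0| * a ^ 2) := by
  have ha0 : (0:ℝ) < a := by linarith
  have ha2 : (1:ℝ) < a ^ 2 := by nlinarith
  have ha2pos : (0:ℝ) < a ^ 2 := by positivity
  have hainv : (0:ℝ) < (a ^ 2)⁻¹ := by positivity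
  have hainv1 : (a ^ 2)⁻¹ < 1 := by
    rw [inv_lt_one_iff₀]; right; exact ha2
  -- x = A u, y = A u⊥
  have hX : (p * u0 + q * u1) ^ 2 + (r * u0 + t * u1) ^ 2 = (a ^ 2)⁻¹ := by
    linear_combination u0 * eu0 + u1 * eu1 + (a ^ 2)⁻¹ * hu2
  have hXY : (p * u0 + q * u1) * (q * u0 - p * u1) + (r * u0 + t * u1) * (t * u0 - r * u1) = 0 := by
    linear_combination (-u1) * eu0 + u0 * eu1
  have hWxy : (p * u0 + q * u1) * (t * u0 - r * u1) - (r * u0 + t * u1) * (q * u0 - p * u1) = 1 := by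
    linear_combination (u0 ^ 2 + u1 ^ 2) * hdet + hu2
  have key : ((p * u0 + q * u1) ^ 2 + (r * u0 + t * u1) ^ 2) *
      ((q * u0 - p * u1) ^ 2 + (t * u0 - r * u1) ^ 2) = 1 := by
    linear_combination
      ((p * u0 + q * u1) * (q * u0 - p * u1) + (r * u0 + t * u1) * (t * u0 - r * u1)) * hXY +
      ((p * u0 + q * u1) * (t * u0 - r * u1) - (r * u0 + t * u1) * (q * u0 - p * u1) + 1) * hWxy
  have hY : (q * u0 - p * u1) ^ 2 + (t * u0 - r * u1) ^ 2 = a ^ 2 := by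
    rw [hX] at key
    field_simp at key
    linarith
  -- A Aᵀ x = a⁻² x
  have g0 : (p * p + q * q) * (p * u0 + q * u1) + (p * r + q * t) * (r * u0 + t * u1)
      = (a ^ 2)⁻¹ * (p * u0 + q * u1) := by
    linear_combination p * eu0 + q * eu1
  have g1 : (r * p + t * q) * (p * u0 + q * u1) + (r * r + t * t) * (r * u0 + t * u1)
      = (a ^ 2)⁻¹ * (r * u0 + t * u1) := by
    linear_combination r * eu0 + t * eu1
  -- ⟨x, w⟩ = 0
  have h6 : (a ^ 2 - (a ^ 2)⁻¹) * ((p * u0 + q * u1) * w0 + (r * u0 + t * u1) * w1) = 0 := by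
    linear_combination w0 * g0 + w1 * g1 - (p * u0 + q * u1) * ew0 - (r * u0 + t * u1) * ew1
  have hxw : (p * u0 + q * u1) * w0 + (r * u0 + t * u1) * w1 = 0 := by
    rcases mul_eq_zero.mp h6 with h | h
    · exfalso; linarith
    · exact h
  -- wedge(x,w)² = a⁻²
  have hwedgesq : ((p * u0 + q * u1) * w1 - (r * u0 + t * u1) * w0) ^ 2 = (a ^ 2)⁻¹ := by
    have : ((p * u0 + q * u1) * w1 - (r * u0 + t * u1) * w0) ^ 2 =
        ((p * u0 + q * u1) ^ 2 + (r * u0 + t * u1) ^ 2) * (w0 ^ 2 + w1 ^ 2) -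
        ((p * u0 + q * u1) * w0 + (r * u0 + t * u1) * w1) ^ 2 := by ring
    rw [this, hX, hw2, hxw]; ring
  -- wedge(y,w) = 0
  have hyw : (q * u0 - p * u1) * w1 - (t * u0 - r * u1) * w0 = 0 := by
    have h8 : ((p * u0 + q * u1) ^ 2 + (r * u0 + t * u1) ^ 2) *
        ((q * u0 - p * u1) * w1 - (t * u0 - r * u1) * w0) =
        ((p * u0 + q * u1) * (q * u0 - p * u1) + (r * u0 + t * u1) * (t * u0 - r * u1)) *
          ((p * u0 + q * u1) * w1 - (r * u0 + t * u1) * w0) -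
        ((p * u0 + q * u1) * w0 + (r * u0 + t * u1) * w1) *
          ((p * u0 + q * u1) * (t * u0 - r * u1) - (r * u0 + t * u1) * (q * u0 - p * u1)) := by
      ring
    rw [hX, hXY, hxw] at h8
    simp only [zero_mul, sub_zero] at h8
    exact (mul_eq_zero.mp h8).resolve_left (ne_of_gt hainv)
  -- decomposition of v
  have e0 : p * v0 + q * v1 =
      (v0 * u0 + v1 * u1) * (p * u0 + q * u1) + (v1 * u0 - v0 * u1) * (q * u0 - p * u1) := by
    linear_combination (-(p * v0 + q * v1)) * hu2
  have e1 : r * v0 + t * v1 =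
      (v0 * u0 + v1 * u1) * (r * u0 + t * u1) + (v1 * u0 - v0 * u1) * (t * u0 - r * u1) := by
    linear_combination (-(r * v0 + t * v1)) * hu2
  have hc2s2 : (v0 * u0 + v1 * u1) ^ 2 + (v1 * u0 - v0 * u1) ^ 2 = 1 := by
    linear_combination (v0 ^ 2 + v1 ^ 2) * hu2 + hv2
  -- Q = c² a⁻² + s² a²
  have hQeq : (p * v0 + q * v1) ^ 2 + (r * v0 + t * v1) ^ 2 =
      (v0 * u0 + v1 * u1) ^ 2 * (a ^ 2)⁻¹ + (v1 * u0 - v0 * u1) ^ 2 * a ^ 2 := by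
    rw [e0, e1]
    linear_combination (v0 * u0 + v1 * u1) ^ 2 * hX +
      (2 * (v0 * u0 + v1 * u1) * (v1 * u0 - v0 * u1)) * hXY +
      (v1 * u0 - v0 * u1) ^ 2 * hY
  -- wedge(Av, w) = c · wedge(x, w)
  have hWveq : (p * v0 + q * v1) * w1 - (r * v0 + t * v1) * w0 =
      (v0 * u0 + v1 * u1) * ((p * u0 + q * u1) * w1 - (r * u0 + t * u1) * w0) := by
    rw [e0, e1]
    linear_combination (v1 * u0 - v0 * u1) * hyw
  have hWv2 : ((p * v0 + q * v1) * w1 - (r * v0 + t * v1) * w0) ^ 2 =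
      (v0 * u0 + v1 * u1) ^ 2 * (a ^ 2)⁻¹ := by
    rw [hWveq, mul_pow, hwedgesq]
  -- positivity facts
  have hs : (0:ℝ) < |v0 * u1 - v1 * u0| := abs_pos.mpr hvu
  have hs2 : (0:ℝ) < (v1 * u0 - v0 * u1) ^ 2 := by
    have : v1 * u0 - v0 * u1 ≠ 0 := fun h => hvu (by linarith)
    positivity
  have hQpos : (0:ℝ) < (p * v0 + q * v1) ^ 2 + (r * v0 + t * v1) ^ 2 := by
    rw [hQeq]
    have h1 := mul_pos hs2 ha2pos
    have h2 : (0:ℝ) ≤ (v0 * u0 + v1 * u1) ^ 2 * (a ^ 2)⁻¹ := by positivity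
    linarith
  have hsqrtpos : (0:ℝ) < Real.sqrt ((p * v0 + q * v1) ^ 2 + (r * v0 + t * v1) ^ 2) :=
    Real.sqrt_pos.mpr hQpos
  have hdenpos : (0:ℝ) < |v0 * u1 - v1 * u0| * a ^ 2 := mul_pos hs ha2pos
  rw [div_le_div_iff₀ hsqrtpos hdenpos, one_mul]
  have hLnn : (0:ℝ) ≤ |(p * v0 + q * v1) * w1 - (r * v0 + t * v1) * w0| *
      (|v0 * u1 - v1 * u0| * a ^ 2) := by positivity
  rw [Real.le_sqrt hLnn hQpos.le, mul_pow, mul_pow, sq_abs, sq_abs, hWv2, hQeq]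
  have ha' : a ≠ 0 := ne_of_gt ha0
  have hsw : (v0 * u1 - v1 * u0) ^ 2 = (v1 * u0 - v0 * u1) ^ 2 := by ring
  rw [hsw]
  have h1 : (v0 * u0 + v1 * u1) ^ 2 ≤ 1 := by linarith [hc2s2, sq_nonneg (v1 * u0 - v0 * u1)]
  have hL : (v0 * u0 + v1 * u1) ^ 2 * (a ^ 2)⁻¹ * ((v1 * u0 - v0 * u1) ^ 2 * (a ^ 2) ^ 2) =
      (v0 * u0 + v1 * u1) ^ 2 * ((v1 * u0 - v0 * u1) ^ 2 * a ^ 2) := by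
    field_simp
  rw [hL]
  have h2 : (v0 * u0 + v1 * u1) ^ 2 * ((v1 * u0 - v0 * u1) ^ 2 * a ^ 2) ≤
      1 * ((v1 * u0 - v0 * u1) ^ 2 * a ^ 2) :=
    mul_le_mul_of_nonneg_right h1 (by positivity)
  have h3 : (0:ℝ) ≤ (v0 * u0 + v1 * u1) ^ 2 * (a ^ 2)⁻¹ := by positivity
  linarith

open Matrix

noncomputable section

/-- For `A ∈ SL₂(ℝ)` with `‖A‖ > 1`, `u` the least singular direction of `A`
(`AᵀA u = ‖A‖⁻² u`) and `w` the top singular direction of `Aᵀ` (`AAᵀ w = ‖A‖² w`), every unit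
vector `v` with `v ∧ u ≠ 0` satisfies `|(Av) ∧ w|/‖Av‖ ≤ 1/(|v ∧ u|·‖A‖²)`. -/
theorem stmt_14 (A : Matrix (Fin 2) (Fin 2) ℝ) (hdet : A.det = 1) (hA : 1 < opnorm A)
    (u : Fin 2 → ℝ) (hu : vnorm u = 1)
    (hu' : (Aᵀ * A).mulVec u = ((opnorm A) ^ 2)⁻¹ • u)
    (w : Fin 2 → ℝ) (hw : vnorm w = 1)
    (hw' : (A * Aᵀ).mulVec w = ((opnorm A) ^ 2) • w) :
    ∀ v : Fin 2 → ℝ, vnorm v = 1 → wedge v u ≠ 0 →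
      |wedge (A.mulVec v) w| / vnorm (A.mulVec v) ≤ 1 / (|wedge v u| * (opnorm A) ^ 2) := by
  intro v hv hvu
  have hdet' : A 0 0 * A 1 1 - A 0 1 * A 1 0 = 1 := by
    rw [Matrix.det_fin_two] at hdet; linarith
  rw [vnorm, Real.sqrt_eq_one] at hu hv hw
  have eu0 := congrFun hu' 0
  have eu1 := congrFun hu' 1
  have ew0 := congrFun hw' 0
  have ew1 := congrFun hw' 1
  simp only [Matrix.mulVec, Matrix.mul_apply, Fin.sum_univ_two, Matrix.transpose_apply,
    dotProduct, Pi.smul_apply, smul_eq_mul] at eu0 eu1 ew0 ew1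
  rw [wedge] at hvu
  have key := aux14 (opnorm A) (A 0 0) (A 0 1) (A 1 0) (A 1 1) (u 0) (u 1) (w 0) (w 1)
    (v 0) (v 1) hA hdet' hu hw hv
    (by linear_combination eu0) (by linear_combination eu1)
    (by linear_combination ew0) (by linear_combination ew1) hvu
  rw [wedge, wedge, vnorm]
  simp only [Matrix.mulVec, Fin.sum_univ_two, dotProduct]
  exact key
end
end

section
/- There exists γ₀ > 0 with the following property. Let γ ≥ γ₀ and let B, A ∈ Mat₂(ℝ) with det B = det A = 1 admit a γ-matching, i.e. there exist unit vectors e₁, e₂ ∈ ℝ² with (A B e₁) ∧ e₂ = 0, e^γ ≤ ‖B e₁‖ ≤ ‖B‖ ≤ 2e^γ, and e^γ ≤ ‖A⁻¹ e₂‖ ≤ ‖A‖ ≤ 2e^γ. Let u_B be a unit vector with (Bᵀ B) u_B = ‖B‖⁻² u_B and let w_A be a unit vector with (A Aᵀ) w_A = ‖A‖² w_A. Then for all unit vectors v, w ∈ ℝ² satisfying |v ∧ u_B| ≥ e^{−γ} and |w ∧ w_A| ≥ e^{−γ}, one has |(B v) ∧ (A⁻¹ w)| / ( ‖B v‖ ·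 ‖A⁻¹ w‖ ) ≤ 3 e^{−γ}. -/
open Matrix

noncomputable section

lemma vnorm_nn (v : Fin 2 → ℝ) : 0 ≤ vnorm v := Real.sqrt_nonneg _

lemma vnorm_sq (v : Fin 2 → ℝ) : vnorm v ^ 2 = v 0 ^ 2 + v 1 ^ 2 :=
  Real.sq_sqrt (by positivity)

lemma abs_wedge_le (u w : Fin 2 → ℝ) : |wedge u w| ≤ vnorm u * vnorm w := by
  have h2 : |wedge u w| ^ 2 ≤ (vnorm u * vnorm w) ^ 2 := by
    rw [sq_abs, mul_pow, vnorm_sq, vnorm_sq]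
    unfold wedge
    nlinarith [sq_nonneg (u 0 * w 0 + u 1 * w 1)]
  nlinarith [abs_nonneg (wedge u w), mul_nonneg (vnorm_nn u) (vnorm_nn w)]

lemma abs_dot_le (u w : Fin 2 → ℝ) : |u 0 * w 0 + u 1 * w 1| ≤ vnorm u * vnorm w := by
  have h2 : |u 0 * w 0 + u 1 * w 1| ^ 2 ≤ (vnorm u * vnorm w) ^ 2 := by
    rw [sq_abs, mul_pow, vnorm_sq, vnorm_sq]
    nlinarith [sq_nonneg (u 0 * w 1 - u 1 * w 0)]
  nlinarith [abs_nonneg (u 0 * w 0 + u 1 * w 1), mul_nonneg (vnorm_nn u) (vnorm_nn w)]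

lemma wedge_triple (x y z : Fin 2 → ℝ) :
    wedge x z * (vnorm y) ^ 2 =
      wedge x y * (y 0 * z 0 + y 1 * z 1) + (x 0 * y 0 + x 1 * y 1) * wedge y z := by
  rw [vnorm_sq]; unfold wedge; ring

lemma wedge_mulVec (M : Matrix (Fin 2) (Fin 2) ℝ) (u w : Fin 2 → ℝ) :
    wedge (M.mulVec u) (M.mulVec w) = M.det * wedge u w := by
  simp [wedge, Matrix.mulVec, dotProduct, Fin.sum_univ_two, Matrix.det_fin_two]
  ring

lemma dot_mulVec_transpose (M : Matrix (Fin 2) (Fin 2) ℝ) (u w : Fin 2 → ℝ) :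
    u 0 * (Mᵀ.mulVec w) 0 + u 1 * (Mᵀ.mulVec w) 1
      = (M.mulVec u) 0 * w 0 + (M.mulVec u) 1 * w 1 := by
  simp [Matrix.mulVec, dotProduct, Fin.sum_univ_two, Matrix.transpose_apply]
  ring

/-- Arithmetic: from `nm² s² = 1`, `E ≤ s`, `Eε = 1` deduce `nm ≤ ε`. -/
lemma aux_nm_le (nm s E ε : ℝ) (h : nm ^ 2 * s ^ 2 = 1) (hs : E ≤ s) (hE : 0 < E)
    (hε : 0 < ε) (hEε : E * ε = 1) (h0 : 0 ≤ nm) : nm ≤ ε := by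
  have hs0 : 0 < s := lt_of_lt_of_le hE hs
  have hEs : E * E ≤ s * s := mul_le_mul hs hs hE.le hs0.le
  have h1 : nm ^ 2 * E ^ 2 ≤ 1 := by nlinarith [sq_nonneg nm, hEs, h]
  have hEε2 : E ^ 2 * ε ^ 2 = 1 := by rw [← mul_pow, hEε, one_pow]
  have h2 : nm ^ 2 ≤ ε ^ 2 := by nlinarith [pow_pos hE 2]
  nlinarith

/-- Arithmetic: from `ε ≤ nx · nm`, `nm ≤ ε` deduce `1 ≤ nx`. -/
lemma aux_one_le (nx nm ε : ℝ) (h3 : ε ≤ nx * nm) (hnm : nm ≤ ε) (hε : 0 < ε)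
    (h0 : 0 ≤ nx) : 1 ≤ nx := by nlinarith

/-- Arithmetic: the final chaining estimate. -/
lemma aux_final (Axq W nx ny np nq E ε : ℝ)
    (hA1 : Axq * ny ^ 2 ≤ ny * nq + nx * ny * W)
    (hW1 : W * np ^ 2 ≤ ny * np)
    (hny : E ≤ ny) (hnp : E ≤ np) (hnx : 1 ≤ nx) (hnq : 1 ≤ nq)
    (hE : 0 < E) (hε : 0 < ε) (hEε : E * ε = 1)
    (hW0 : 0 ≤ W) (hA0 : 0 ≤ Axq) :
    Axq ≤ 3 * ε * (nx * nq) := by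
  have hny0 : 0 < ny := lt_of_lt_of_le hE hny
  have hnp0 : 0 < np := lt_of_lt_of_le hE hnp
  have hnx0 : 0 < nx := lt_of_lt_of_le one_pos hnx
  have hnq0 : 0 < nq := lt_of_lt_of_le one_pos hnq
  have hWp : W * np ≤ ny := by
    have h1 : W * np * np ≤ ny * np := by nlinarith [hW1]
    exact le_of_mul_le_mul_right h1 hnp0
  have hWE : W * E ≤ ny := by nlinarith [hWp, hW0, hnp]
  have c0 := mul_le_mul_of_nonneg_right hA1 hE.le
  have c1 : ny * nq * E ≤ ny * ny * nq := by
    nlinarith [mul_nonneg (mul_nonneg hny0.le hnq0.le) (sub_nonneg.mpr hny)]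
  have c2 : nx * ny * (W * E) ≤ nx * ny * ny :=
    mul_le_mul_of_nonneg_left hWE (by positivity)
  have t4 : Axq * E * ny ^ 2 ≤ (nq + nx) * ny ^ 2 := by nlinarith [c0, c1, c2]
  have hAE : Axq * E ≤ nq + nx := le_of_mul_le_mul_right t4 (by positivity)
  have u2 : nq + nx ≤ 2 * (nx * nq) := by nlinarith
  nlinarith [mul_le_mul_of_nonneg_right hAE hε.le, u2, hε,
    mul_pos hnx0 hnq0]

set_option maxHeartbeats 1000000 in
/-- There is `γ₀ > 0` such that for `γ ≥ γ₀` and `B, A ∈ SL₂(ℝ)` admitting a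
`γ`-matching (unit vectors `e₁, e₂` with `ABe₁ ∥ e₂`, `e^γ ≤ ‖Be₁‖ ≤ ‖B‖ ≤ 2e^γ` and
`e^γ ≤ ‖A⁻¹e₂‖ ≤ ‖A‖ ≤ 2e^γ`), if `u_B` is the least singular direction of `B` and `w_A`
the top singular direction of `Aᵀ`, then all unit vectors `v, w` with
`|v ∧ u_B| ≥ e^{−γ}` and `|w ∧ w_A| ≥ e^{−γ}` satisfy
`|(Bv) ∧ (A⁻¹w)|/(‖Bv‖‖A⁻¹w‖) ≤ 3e^{−γ}`. -/
theorem stmt_15 :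
    ∃ γ₀ > (0 : ℝ), ∀ γ : ℝ, γ₀ ≤ γ → ∀ B A : Matrix (Fin 2) (Fin 2) ℝ,
      B.det = 1 → A.det = 1 →
      ∀ e₁ e₂ : Fin 2 → ℝ, vnorm e₁ = 1 → vnorm e₂ = 1 →
        wedge ((A * B).mulVec e₁) e₂ = 0 →
        Real.exp γ ≤ vnorm (B.mulVec e₁) → vnorm (B.mulVec e₁) ≤ opnorm B →
        opnorm B ≤ 2 * Real.exp γ →
        Real.exp γ ≤ vnorm (A⁻¹.mulVec e₂) → vnorm (A⁻¹.mulVec e₂) ≤ opnorm A →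
        opnorm A ≤ 2 * Real.exp γ →
      ∀ uB : Fin 2 → ℝ, vnorm uB = 1 → (Bᵀ * B).mulVec uB = ((opnorm B) ^ 2)⁻¹ • uB →
      ∀ wA : Fin 2 → ℝ, vnorm wA = 1 → (A * Aᵀ).mulVec wA = ((opnorm A) ^ 2) • wA →
      ∀ v w : Fin 2 → ℝ, vnorm v = 1 → vnorm w = 1 →
        Real.exp (-γ) ≤ |wedge v uB| → Real.exp (-γ) ≤ |wedge w wA| →
        |wedge (B.mulVec v) (A⁻¹.mulVec w)| /
            (vnorm (B.mulVec v) * vnorm (A⁻¹.mulVec w)) ≤ 3 * Real.exp (-γ) := by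
  refine ⟨1, one_pos, ?_⟩
  intro γ hγ B A hB hA e₁ e₂ he₁ he₂ hmatch hBe1 hBe1' hBop hAe2 hAe2' hAop
    uB huB huBeig wA hwA hwAeig v w hv hw hvuB hwwA
  set E := Real.exp γ with hEdef
  set ε := Real.exp (-γ) with hεdef
  have hEpos : 0 < E := Real.exp_pos γ
  have hεpos : 0 < ε := Real.exp_pos _
  have hEε : E * ε = 1 := by
    rw [hEdef, hεdef, ← Real.exp_add, add_neg_cancel, Real.exp_zero]
  -- invertibility of A
  have hdetA : IsUnit A.det := by rw [hA]; exact isUnit_one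
  have hAAinv : A * A⁻¹ = 1 := Matrix.mul_nonsing_inv A hdetA
  have hAinvA : A⁻¹ * A = 1 := Matrix.nonsing_inv_mul A hdetA
  have hdetAinv : A⁻¹.det = 1 := by rw [Matrix.det_nonsing_inv, hA]; simp
  set sB := opnorm B with hsBdef
  set sA := opnorm A with hsAdef
  set x := B.mulVec v with hxdef
  set y := B.mulVec e₁ with hydef
  set p := A⁻¹.mulVec e₂ with hpdef
  set q := A⁻¹.mulVec w with hqdef
  set m := B.mulVec uB with hmdef
  set m' := A⁻¹.mulVec wA with hm'def
  have hsB : E ≤ sB := le_trans hBe1 hBe1'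
  have hsA : E ≤ sA := le_trans hAe2 hAe2'
  have hsBpos : 0 < sB := lt_of_lt_of_le hEpos hsB
  have hsApos : 0 < sA := lt_of_lt_of_le hEpos hsA
  have huB1 : uB 0 ^ 2 + uB 1 ^ 2 = 1 := by rw [← vnorm_sq, huB]; norm_num
  have hwA1 : wA 0 ^ 2 + wA 1 ^ 2 = 1 := by rw [← vnorm_sq, hwA]; norm_num
  -- ‖B uB‖² · sB² = 1
  have hm_sq : vnorm m ^ 2 * sB ^ 2 = 1 := by
    have key : m 0 ^ 2 + m 1 ^ 2
        = uB 0 * ((Bᵀ * B).mulVec uB) 0 + uB 1 * ((Bᵀ * B).mulVec uB) 1 := by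
      rw [hmdef, ← Matrix.mulVec_mulVec]
      linear_combination - dot_mulVec_transpose B uB (B.mulVec uB)
    rw [huBeig] at key
    simp only [Pi.smul_apply, smul_eq_mul] at key
    have hval : vnorm m ^ 2 = (sB ^ 2)⁻¹ := by
      rw [vnorm_sq, key]
      linear_combination (sB ^ 2)⁻¹ * huB1
    rw [hval]
    exact inv_mul_cancel₀ (pow_ne_zero 2 (ne_of_gt hsBpos))
  -- ‖A⁻¹ wA‖² · sA² = 1
  have hm'_sq : vnorm m' ^ 2 * sA ^ 2 = 1 := by
    have hAm' : A.mulVec m' = wA := by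
      rw [hm'def, Matrix.mulVec_mulVec, hAAinv, Matrix.one_mulVec]
    have hT : Aᵀ.mulVec wA = sA ^ 2 • m' := by
      have h1 : A⁻¹.mulVec ((A * Aᵀ).mulVec wA) = Aᵀ.mulVec wA := by
        rw [Matrix.mulVec_mulVec, ← Matrix.mul_assoc, hAinvA, Matrix.one_mul]
      rw [← h1, hwAeig, Matrix.mulVec_smul, hm'def]
    have key : m' 0 * (Aᵀ.mulVec wA) 0 + m' 1 * (Aᵀ.mulVec wA) 1
        = (A.mulVec m') 0 * wA 0 + (A.mulVec m') 1 * wA 1 :=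
      dot_mulVec_transpose A m' wA
    rw [hT, hAm'] at key
    simp only [Pi.smul_apply, smul_eq_mul] at key
    rw [vnorm_sq]
    linear_combination key + hwA1
  -- y and p are parallel
  have hyp0 : wedge y p = 0 := by
    have h1 : A.mulVec y = (A * B).mulVec e₁ := by rw [hydef, Matrix.mulVec_mulVec]
    have h2 : A.mulVec p = e₂ := by
      rw [hpdef, Matrix.mulVec_mulVec, hAAinv, Matrix.one_mulVec]
    have h3 : A.det * wedge y p = 0 := by
      rw [← wedge_mulVec, h1, h2, hmatch]
    rwa [hA, one_mul] at h3
  -- the auxiliary directions are short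
  have hnm : vnorm m ≤ ε := aux_nm_le _ _ _ _ hm_sq hsB hEpos hεpos hEε (vnorm_nn m)
  have hnm' : vnorm m' ≤ ε := aux_nm_le _ _ _ _ hm'_sq hsA hEpos hεpos hEε (vnorm_nn m')
  -- lower bounds ‖x‖, ‖q‖ ≥ 1
  have hnx : 1 ≤ vnorm x := by
    have h1 : |wedge x m| = |wedge v uB| := by
      rw [hxdef, hmdef, wedge_mulVec, hB, one_mul]
    have h3 : ε ≤ vnorm x * vnorm m := by
      have h2 := abs_wedge_le x m
      rw [h1] at h2
      linarith only [h2, hvuB]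
    exact aux_one_le _ _ _ h3 hnm hεpos (vnorm_nn x)
  have hnq : 1 ≤ vnorm q := by
    have h1 : |wedge q m'| = |wedge w wA| := by
      rw [hqdef, hm'def, wedge_mulVec, hdetAinv, one_mul]
    have h3 : ε ≤ vnorm q * vnorm m' := by
      have h2 := abs_wedge_le q m'
      rw [h1] at h2
      linarith only [h2, hwwA]
    exact aux_one_le _ _ _ h3 hnm' hεpos (vnorm_nn q)
  -- wedge bounds along the chain
  have hxy : |wedge x y| ≤ 1 := by
    have h1 : wedge x y = wedge v e₁ := by rw [hxdef, hydef, wedge_mulVec, hB, one_mul]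
    have h2 := abs_wedge_le v e₁
    rw [hv, he₁] at h2
    rw [h1]; linarith only [h2]
  have hpq : |wedge p q| ≤ 1 := by
    have h1 : wedge p q = wedge e₂ w := by
      rw [hpdef, hqdef, wedge_mulVec, hdetAinv, one_mul]
    have h2 := abs_wedge_le e₂ w
    rw [hw, he₂] at h2
    rw [h1]; linarith only [h2]
  set W := |wedge y q| with hWdef
  have hW1 : W * vnorm p ^ 2 ≤ vnorm y * vnorm p := by
    have hid := wedge_triple y p q
    rw [hyp0, zero_mul, zero_add] at hid
    have heq : W * vnorm p ^ 2 = |y 0 * p 0 + y 1 * p 1| * |wedge p q| := by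
      rw [hWdef, ← abs_mul, ← hid, abs_mul, abs_of_nonneg (sq_nonneg (vnorm p))]
    rw [heq]
    calc |y 0 * p 0 + y 1 * p 1| * |wedge p q|
        ≤ (vnorm y * vnorm p) * 1 := by
          apply mul_le_mul (abs_dot_le y p) hpq (abs_nonneg _)
            (mul_nonneg (vnorm_nn y) (vnorm_nn p))
      _ = vnorm y * vnorm p := mul_one _
  have hA1 : |wedge x q| * vnorm y ^ 2 ≤ vnorm y * vnorm q + vnorm x * vnorm y * W := by
    have hid := wedge_triple x y q
    have heq : |wedge x q| * vnorm y ^ 2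
        = |wedge x y * (y 0 * q 0 + y 1 * q 1) + (x 0 * y 0 + x 1 * y 1) * wedge y q| := by
      rw [← hid, abs_mul, abs_of_nonneg (sq_nonneg (vnorm y))]
    rw [heq]
    calc |wedge x y * (y 0 * q 0 + y 1 * q 1) + (x 0 * y 0 + x 1 * y 1) * wedge y q|
        ≤ |wedge x y| * |y 0 * q 0 + y 1 * q 1| + |x 0 * y 0 + x 1 * y 1| * |wedge y q| := by
          rw [← abs_mul, ← abs_mul]; exact abs_add_le _ _
      _ ≤ 1 * (vnorm y * vnorm q) + (vnorm x * vnorm y) * W := by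
          have g1 : |wedge x y| * |y 0 * q 0 + y 1 * q 1| ≤ 1 * (vnorm y * vnorm q) :=
            mul_le_mul hxy (abs_dot_le y q) (abs_nonneg _) zero_le_one
          have g2 : |x 0 * y 0 + x 1 * y 1| * |wedge y q| ≤ (vnorm x * vnorm y) * W := by
            rw [hWdef]
            exact mul_le_mul (abs_dot_le x y) le_rfl (abs_nonneg _)
              (mul_nonneg (vnorm_nn x) (vnorm_nn y))
          linarith only [g1, g2]
      _ = vnorm y * vnorm q + vnorm x * vnorm y * W := by ring
  -- conclude
  have hfinal : |wedge x q| ≤ 3 * ε * (vnorm x * vnorm q) :=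
    aux_final _ _ _ _ _ _ _ _ hA1 hW1 hBe1 hAe2 hnx hnq hEpos hεpos hEε
      (abs_nonneg _) (abs_nonneg _)
  have h11 : (1:ℝ) * 1 ≤ vnorm x * vnorm q :=
    mul_le_mul hnx hnq zero_le_one (le_trans zero_le_one hnx)
  have hden : 0 < vnorm x * vnorm q := by linarith only [h11]
  rw [div_le_iff₀ hden]
  linarith only [hfinal]
end
end
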